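/- Let m ≥ 3 and n ≥ 2 be integers. If K_m □ P_n admits a locating (m+1)-coloring, then n ≤ m + 1. -/

import Mathlib

open SimpleGraph

/-- The distance from a vertex to a set of vertices. -/
noncomputable def setDist {V : Type*} (G : SimpleGraph V) (v : V) (S : Set V) : ℕ :=
  sInf (G.dist v '' S)

/-- The color code of a vertex with respect to a `k`-coloring `c`:
the tuple of distances to the color classes. -/
noncomputable def colorCode {V : Type*} (G : SimpleGraph V) {k : ℕ} (c : V → Fin k)
    (v : V) : Fin k → ℕ :=
  fun i => setDist G v (c ⁻¹' {i})

/-- `c` is a locating `k`-coloring of `G`: a proper coloring onto the `k` colors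
such that distinct vertices have distinct color codes. -/
def IsLocatingColoring {V : Type*} (G : SimpleGraph V) {k : ℕ} (c : V → Fin k) : Prop :=
  Function.Surjective c ∧
  (∀ u v : V, G.Adj u v → c u ≠ c v) ∧
  Function.Injective (colorCode G c)

/-- The locating chromatic number: the least `k` admitting a locating `k`-coloring. -/
noncomputable def locatingChromaticNumber {V : Type*} (G : SimpleGraph V) : ℕ :=
  sInf {k : ℕ | ∃ c : V → Fin k, IsLocatingColoring G c}

/-- A vertex is colorful w.r.t. a coloring `c` if every color appears in its
closed neighborhood. -/
def IsColorful {V : Type*} (G : SimpleGraph V) {k : ℕ} (c : V → Fin k) (v : V) : Prop :=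
  ∀ i : Fin k, ∃ u : V, (u = v ∨ G.Adj v u) ∧ c u = i

/-!
Each column of `K_m □ P_n` is a copy of `K_m` carrying `m` of the `m + 1` colors, so the color
code of a vertex is `0` at its own color and `1` at every other color present in its column; only
the distance to the one color missing from the column carries information.

Two adjacent columns cannot miss the same color `i`. Otherwise look at the occurrences of `i`
nearest to them: if all of them lie on one side, the two extreme columns on the other side contain
two vertices of the same color at the same distance from `i`; if there are occurrences on both
sides, then (as `m ≥ 3`) some color appears in both columns bordering the gap at distance `2`
from `i`.

Hence every column has a vertex adjacent to the color missing from it. Such a vertex has code `0`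
at its own color and `1` elsewhere, so these `n` vertices have pairwise distinct colors.
-/

namespace SimpleGraph

variable {α β : Type*} {G : SimpleGraph α} {H : SimpleGraph β}

lemma dist_boxProd_of_reachable {x y : α × β} (h₁ : G.Reachable x.1 y.1)
    (h₂ : H.Reachable x.2 y.2) :
    (G □ H).dist x y = G.dist x.1 y.1 + H.dist x.2 y.2 := by
  have h := (reachable_boxProd.2 ⟨h₁, h₂⟩ : (G □ H).Reachable x y).coe_dist_eq_edist
  rw [edist_boxProd, ← h₁.coe_dist_eq_edist, ← h₂.coe_dist_eq_edist] at h
  exact_mod_cast h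

variable {n : ℕ}

lemma Walk.dist_val_le_length {i j : Fin n} (w : (pathGraph n).Walk i j) :
    Nat.dist i j ≤ w.length := by
  induction w with
  | nil => simp
  | cons h _ ih =>
    rw [pathGraph_adj] at h
    rw [Walk.length_cons]
    unfold Nat.dist at ih ⊢
    omega

lemma pathGraph_dist_le_of_val_eq_add : ∀ (k : ℕ) (i j : Fin n), (j : ℕ) = i + k →
    (pathGraph n).dist i j ≤ k
  | 0, i, j, h => by simp [Fin.ext (by omega : (i : ℕ) = j)]
  | k + 1, i, j, h => by
    obtain ⟨j', hj'⟩ : ∃ j' : Fin n, (j' : ℕ) + 1 = j := ⟨⟨j - 1, by omega⟩, Nat.sub_add_cancel (by omega)⟩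
    have hadj : (pathGraph n).Adj j' j := pathGraph_adj.2 (Or.inl hj')
    calc (pathGraph n).dist i j ≤ (pathGraph n).dist i j' + (pathGraph n).dist j' j :=
          hadj.reachable.dist_triangle_right i
      _ ≤ k + 1 := by
        rw [dist_eq_one_iff_adj.2 hadj]
        gcongr
        exact pathGraph_dist_le_of_val_eq_add k i j' (by omega)

lemma pathGraph_dist (i j : Fin n) : (pathGraph n).dist i j = Nat.dist i j := by
  refine le_antisymm ?_ ?_
  · rcases le_total (i : ℕ) j with h | h
    · exact pathGraph_dist_le_of_val_eq_add _ i j (by unfold Nat.dist; omega)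
    · rw [dist_comm, Nat.dist_comm]
      exact pathGraph_dist_le_of_val_eq_add _ j i (by unfold Nat.dist; omega)
  · obtain ⟨w, hw⟩ := (pathGraph_preconnected n i j).exists_walk_length_eq_dist
    exact hw ▸ w.dist_val_le_length

lemma dist_top_boxProd_pathGraph {m : ℕ} (a b : Fin m) (i j : Fin n) :
    ((⊤ : SimpleGraph (Fin m)) □ pathGraph n).dist (a, i) (b, j) =
      Nat.dist i j + if a = b then 0 else 1 := by
  rw [dist_boxProd_of_reachable (preconnected_top _ _) (pathGraph_preconnected n _ _), dist_top,
    pathGraph_dist, add_comm]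

end SimpleGraph

lemma Finset.exists_le_le_forall_le_or_le {α : Type*} [LinearOrder α] {s : Finset α}
    {a b k : α} (ha : a ∈ s) (hb : b ∈ s) (hak : a ≤ k) (hkb : k ≤ b) :
    ∃ p ∈ s, ∃ q ∈ s, p ≤ k ∧ k ≤ q ∧ ∀ x ∈ s, x ≤ p ∨ q ≤ x := by
  classical
  have hL : (s.filter (· ≤ k)).Nonempty := ⟨a, Finset.mem_filter.2 ⟨ha, hak⟩⟩
  have hR : (s.filter (k ≤ ·)).Nonempty := ⟨b, Finset.mem_filter.2 ⟨hb, hkb⟩⟩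
  obtain ⟨hp, hpk⟩ := Finset.mem_filter.1 (Finset.max'_mem _ hL)
  obtain ⟨hq, hkq⟩ := Finset.mem_filter.1 (Finset.min'_mem _ hR)
  refine ⟨_, hp, _, hq, hpk, hkq, fun x hx => ?_⟩
  rcases le_total x k with h | h
  · exact Or.inl (Finset.le_max' _ x (Finset.mem_filter.2 ⟨hx, h⟩))
  · exact Or.inr (Finset.min'_le _ x (Finset.mem_filter.2 ⟨hx, h⟩))

section colorCode

variable {V : Type*} {G : SimpleGraph V} {k : ℕ} {c : V → Fin k} {u v : V} {i : Fin k}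

lemma colorCode_le_dist (hu : c u = i) : colorCode G c v i ≤ G.dist v u :=
  Nat.sInf_le ⟨u, hu, rfl⟩

lemma le_colorCode {d : ℕ} (hu : c u = i) (h : ∀ w, c w = i → d ≤ G.dist v w) :
    d ≤ colorCode G c v i :=
  le_csInf ⟨_, u, hu, rfl⟩ (by rintro _ ⟨w, hw, rfl⟩; exact h w hw)

lemma colorCode_apply_self (c : V → Fin k) (v : V) : colorCode G c v (c v) = 0 :=
  Nat.le_zero.1 ((colorCode_le_dist rfl).trans_eq SimpleGraph.dist_self)

lemma colorCode_eq_one_of_adj (hG : G.Preconnected) (hv : c v ≠ i) (hu : c u = i)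
    (hadj : G.Adj v u) : colorCode G c v i = 1 := by
  refine le_antisymm ((colorCode_le_dist hu).trans (dist_eq_one_iff_adj.2 hadj).le) ?_
  exact le_colorCode hu fun w hw => (hG v w).pos_dist_of_ne fun h => hv (h ▸ hw)

end colorCode

section LocatingColoring

variable {m n : ℕ} {c : Fin m × Fin n → Fin (m + 1)}

local notation "𝒢" => SimpleGraph.boxProd (⊤ : SimpleGraph (Fin m)) (pathGraph n)

lemma IsLocatingColoring.injective_column (hc : IsLocatingColoring 𝒢 c) (j : Fin n) :
    Function.Injective fun a => c (a, j) := by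
  intro a b h
  by_contra hab
  exact hc.2.1 _ _ (boxProd_adj_left.2 hab) h

lemma exists_forall_ne_column (c : Fin m × Fin n → Fin (m + 1)) (j : Fin n) :
    ∃ i, ∀ a, c (a, j) ≠ i := by
  by_contra! h
  simpa using Fintype.card_le_of_surjective (fun a => c (a, j)) h

/-- Any color absent from column `j`; for a proper coloring there is exactly one. -/
noncomputable def missingColor (c : Fin m × Fin n → Fin (m + 1)) (j : Fin n) : Fin (m + 1) :=
  (exists_forall_ne_column c j).choose

lemma apply_ne_missingColor (a : Fin m) (j : Fin n) : c (a, j) ≠ missingColor c j :=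
  (exists_forall_ne_column c j).choose_spec a

lemma IsLocatingColoring.exists_apply_eq (hc : IsLocatingColoring 𝒢 c) {i : Fin (m + 1)}
    {j : Fin n} (hi : i ≠ missingColor c j) : ∃ a, c (a, j) = i := by
  let f : Fin m → {i // i ≠ missingColor c j} := fun a => ⟨c (a, j), apply_ne_missingColor a j⟩
  have hf : Function.Bijective f :=
    (Fintype.bijective_iff_injective_and_card f).2
      ⟨fun a b h => hc.injective_column j (congrArg Subtype.val h), by simp⟩
  obtain ⟨a, ha⟩ := hf.2 ⟨i, hi⟩
  exact ⟨a, congrArg Subtype.val ha⟩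

lemma IsLocatingColoring.missingColor_eq (hc : IsLocatingColoring 𝒢 c) {i : Fin (m + 1)}
    {j : Fin n} (h : ∀ a, c (a, j) ≠ i) : missingColor c j = i := by
  by_contra hi
  obtain ⟨a, ha⟩ := hc.exists_apply_eq (Ne.symm hi)
  exact h a ha

lemma IsLocatingColoring.colorCode_eq_one (hc : IsLocatingColoring 𝒢 c) {a : Fin m} {j : Fin n}
    {i : Fin (m + 1)} (hi : i ≠ c (a, j)) (hi' : i ≠ missingColor c j) :
    colorCode 𝒢 c (a, j) i = 1 := by
  obtain ⟨b, hb⟩ := hc.exists_apply_eq hi'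
  have hab : a ≠ b := by rintro rfl; exact hi hb.symm
  exact colorCode_eq_one_of_adj (preconnected_top.boxProd (pathGraph_preconnected n)) hi.symm hb
    (boxProd_adj_left.2 hab)

lemma IsLocatingColoring.eq_of_colorCode_missingColor_eq (hc : IsLocatingColoring 𝒢 c)
    {a b : Fin m} {j j' : Fin n} (hcol : c (a, j) = c (b, j'))
    (hμ : missingColor c j = missingColor c j')
    (hd : colorCode 𝒢 c (a, j) (missingColor c j) = colorCode 𝒢 c (b, j') (missingColor c j)) :
    (a, j) = (b, j') := by
  refine hc.2.2 (funext fun i => ?_)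
  by_cases h₁ : i = c (a, j)
  · rw [h₁, colorCode_apply_self, hcol, colorCode_apply_self]
  by_cases h₂ : i = missingColor c j
  · rw [h₂, hd]
  rw [hc.colorCode_eq_one h₁ h₂, hc.colorCode_eq_one (hcol ▸ h₁) (hμ ▸ h₂)]

lemma IsLocatingColoring.colorCode_eq_one_of_missingColor (hc : IsLocatingColoring 𝒢 c)
    {a : Fin m} {j : Fin n} (hdom : colorCode 𝒢 c (a, j) (missingColor c j) = 1)
    {i : Fin (m + 1)} (hi : i ≠ c (a, j)) : colorCode 𝒢 c (a, j) i = 1 := by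
  by_cases h : i = missingColor c j
  · rwa [h]
  · exact hc.colorCode_eq_one hi h

lemma IsLocatingColoring.eq_of_colorCode_missingColor_eq_one (hc : IsLocatingColoring 𝒢 c)
    {a b : Fin m} {j j' : Fin n} (hcol : c (a, j) = c (b, j'))
    (ha : colorCode 𝒢 c (a, j) (missingColor c j) = 1)
    (hb : colorCode 𝒢 c (b, j') (missingColor c j') = 1) :
    (a, j) = (b, j') := by
  refine hc.2.2 (funext fun i => ?_)
  by_cases h : i = c (a, j)
  · rw [h, colorCode_apply_self, hcol, colorCode_apply_self]
  rw [hc.colorCode_eq_one_of_missingColor ha h,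
    hc.colorCode_eq_one_of_missingColor hb (hcol ▸ h)]

lemma IsLocatingColoring.colorCode_eq_of_nearest (hc : IsLocatingColoring 𝒢 c)
    {i : Fin (m + 1)} {b : Fin m} {o j : Fin n} (hb : c (b, o) = i)
    (hnear : ∀ b' o', c (b', o') = i → o' ≠ o → Nat.dist j o < Nat.dist j o') (a : Fin m) :
    colorCode 𝒢 c (a, j) i = Nat.dist j o + if a = b then 0 else 1 := by
  refine le_antisymm ((colorCode_le_dist hb).trans_eq (dist_top_boxProd_pathGraph ..)) ?_
  refine le_colorCode hb fun ⟨b', o'⟩ hb' => ?_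
  rw [dist_top_boxProd_pathGraph]
  by_cases ho : o' = o
  · subst ho
    rw [hc.injective_column o' (hb'.trans hb.symm : c (b', o') = c (b, o'))]
  · have := hnear b' o' hb' ho
    split_ifs <;> omega

/-- The vertex `(b, j)` and the vertex of column `j'` with the same color are equally far from
the class of `i`. -/
lemma IsLocatingColoring.false_of_adj_of_nearest (hc : IsLocatingColoring 𝒢 c) {i : Fin (m + 1)}
    {b : Fin m} {o j j' : Fin n} (hadj : (pathGraph n).Adj j j') (hμ : missingColor c j = i)
    (hμ' : missingColor c j' = i) (hb : c (b, o) = i) (hdist : Nat.dist j o = Nat.dist j' o + 1)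
    (hnear : ∀ b' o', c (b', o') = i → o' ≠ o → Nat.dist j o < Nat.dist j o')
    (hnear' : ∀ b' o', c (b', o') = i → o' ≠ o → Nat.dist j' o < Nat.dist j' o') : False := by
  obtain ⟨a, ha⟩ := hc.exists_apply_eq (i := c (b, j)) (hμ' ▸ hμ ▸ apply_ne_missingColor b j)
  have hab : a ≠ b := by
    rintro rfl
    exact hc.2.1 _ _ (boxProd_adj_right.2 hadj) ha.symm
  have := hc.eq_of_colorCode_missingColor_eq ha.symm (hμ.trans hμ'.symm) (by
    rw [hμ, hc.colorCode_eq_of_nearest hb hnear, hc.colorCode_eq_of_nearest hb hnear', if_pos rfl,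
      if_neg hab, hdist])
  exact hadj.ne (congrArg Prod.snd this)

lemma IsLocatingColoring.lt_two_of_forall_le (hc : IsLocatingColoring 𝒢 c) {i : Fin (m + 1)}
    {b : Fin m} {q : Fin n} (hb : c (b, q) = i) (hfirst : ∀ b' o', c (b', o') = i → q ≤ o') :
    (q : ℕ) < 2 := by
  by_contra! hq
  have hμ (j : Fin n) (hj : j < q) : missingColor c j = i :=
    hc.missingColor_eq fun a ha => (hfirst a j ha).not_gt hj
  have hnear (j : Fin n) (hj : j < q) (b' o') (hb' : c (b', o') = i) (ho : o' ≠ q) :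
      Nat.dist j q < Nat.dist j o' := by
    have := lt_of_le_of_ne (hfirst b' o' hb') (Ne.symm ho)
    unfold Nat.dist
    omega
  obtain ⟨j₀, hj₀⟩ : ∃ j : Fin n, (j : ℕ) = 0 := ⟨⟨0, by omega⟩, rfl⟩
  obtain ⟨j₁, hj₁⟩ : ∃ j : Fin n, (j : ℕ) = 1 := ⟨⟨1, by omega⟩, rfl⟩
  exact hc.false_of_adj_of_nearest (pathGraph_adj.2 (Or.inl (by omega))) (hμ j₀ (by omega))
    (hμ j₁ (by omega)) hb (by unfold Nat.dist; omega) (hnear j₀ (by omega)) (hnear j₁ (by omega))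

lemma IsLocatingColoring.lt_add_three_of_forall_ge (hc : IsLocatingColoring 𝒢 c)
    {i : Fin (m + 1)} {b : Fin m} {p : Fin n} (hb : c (b, p) = i)
    (hlast : ∀ b' o', c (b', o') = i → o' ≤ p) : n < p + 3 := by
  by_contra! hp
  have hμ (j : Fin n) (hj : p < j) : missingColor c j = i :=
    hc.missingColor_eq fun a ha => (hlast a j ha).not_gt hj
  have hnear (j : Fin n) (hj : p < j) (b' o') (hb' : c (b', o') = i) (ho : o' ≠ p) :
      Nat.dist j p < Nat.dist j o' := by
    have := lt_of_le_of_ne (hlast b' o' hb') ho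
    unfold Nat.dist
    omega
  obtain ⟨j₀, hj₀⟩ : ∃ j : Fin n, (j : ℕ) = n - 1 := ⟨⟨n - 1, by omega⟩, rfl⟩
  obtain ⟨j₁, hj₁⟩ : ∃ j : Fin n, (j : ℕ) = n - 2 := ⟨⟨n - 2, by omega⟩, rfl⟩
  exact hc.false_of_adj_of_nearest (pathGraph_adj.2 (Or.inr (by omega))) (hμ j₀ (by omega))
    (hμ j₁ (by omega)) hb (by unfold Nat.dist; omega) (hnear j₀ (by omega)) (hnear j₁ (by omega))

/-- Some color `γ` avoids `i`, `c (bp, p + 1)` and `c (bq, q - 1)`; its vertices in columns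
`p + 1` and `q - 1` are both at distance `2` from the class of `i`. -/
lemma IsLocatingColoring.lt_add_three_of_forall_le_or_ge (hc : IsLocatingColoring 𝒢 c)
    (hm : 3 ≤ m) {i : Fin (m + 1)} {bp bq : Fin m} {p q : Fin n} (hbp : c (bp, p) = i)
    (hbq : c (bq, q) = i) (hgap : ∀ b' o', c (b', o') = i → o' ≤ p ∨ q ≤ o') :
    (q : ℕ) < p + 3 := by
  by_contra! hpq
  obtain ⟨y₁, hy₁⟩ : ∃ y : Fin n, (y : ℕ) = p + 1 := ⟨⟨p + 1, by omega⟩, rfl⟩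
  obtain ⟨y₂, hy₂⟩ : ∃ y : Fin n, (y : ℕ) = q - 1 := ⟨⟨q - 1, by omega⟩, rfl⟩
  have hμ (j : Fin n) (h₁ : p < j) (h₂ : j < q) : missingColor c j = i :=
    hc.missingColor_eq fun a ha => by rcases hgap a j ha with h | h <;> order
  have hd (y o : Fin n) (b : Fin m) (hy : Nat.dist y o = 1) (hb : c (b, o) = i)
      (hfar : ∀ o', o' ≤ p ∨ q ≤ o' → o' ≠ o → 1 < Nat.dist y o') (a : Fin m) (ha : a ≠ b) :
      colorCode 𝒢 c (a, y) i = 2 := by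
    rw [hc.colorCode_eq_of_nearest hb (fun b' o' hb' => hy ▸ hfar o' (hgap b' o' hb')) a,
      if_neg ha, hy]
  have hd₁ := hd y₁ p bp (by unfold Nat.dist; omega) hbp (by
    intro o' ho' hne
    have := Fin.val_ne_of_ne hne
    unfold Nat.dist
    omega)
  have hd₂ := hd y₂ q bq (by unfold Nat.dist; omega) hbq (by
    intro o' ho' hne
    have := Fin.val_ne_of_ne hne
    unfold Nat.dist
    omega)
  obtain ⟨γ, -, hγ⟩ := Finset.exists_mem_notMem_of_card_lt_card
    (s := {i, c (bp, y₁), c (bq, y₂)}) (t := Finset.univ)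
    (Finset.card_le_three.trans_lt (by rw [Finset.card_univ, Fintype.card_fin]; omega))
  simp only [Finset.mem_insert, Finset.mem_singleton, not_or] at hγ
  obtain ⟨hγi, hγ₁, hγ₂⟩ := hγ
  have hμ₁ : missingColor c y₁ = i := hμ y₁ (by omega) (by omega)
  have hμ₂ : missingColor c y₂ = i := hμ y₂ (by omega) (by omega)
  obtain ⟨a₁, ha₁⟩ := hc.exists_apply_eq (hμ₁ ▸ hγi)
  obtain ⟨a₂, ha₂⟩ := hc.exists_apply_eq (hμ₂ ▸ hγi)
  have := hc.eq_of_colorCode_missingColor_eq (ha₁.trans ha₂.symm) (hμ₁.trans hμ₂.symm) (by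
    rw [hμ₁, hd₁ a₁ (by rintro rfl; exact hγ₁ ha₁.symm), hd₂ a₂ (by rintro rfl; exact hγ₂ ha₂.symm)])
  have := congrArg Fin.val (Prod.mk.inj this).2
  omega

lemma IsLocatingColoring.missingColor_ne_of_adj (hc : IsLocatingColoring 𝒢 c) (hm : 3 ≤ m)
    {j j' : Fin n} (hadj : (pathGraph n).Adj j j') : missingColor c j ≠ missingColor c j' := by
  wlog hjj' : (j : ℕ) + 1 = j' generalizing j j'
  · exact (this hadj.symm (by rw [pathGraph_adj] at hadj; omega)).symm
  intro hμ
  classical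
  set i := missingColor c j
  let s : Finset (Fin n) := Finset.univ.filter fun o => ∃ b, c (b, o) = i
  have mem_s {o : Fin n} : o ∈ s ↔ ∃ b, c (b, o) = i := by simp [s]
  have hne {o : Fin n} (ho : o ∈ s) : o ≠ j ∧ o ≠ j' := by
    obtain ⟨b, hb⟩ := mem_s.1 ho
    exact ⟨by rintro rfl; exact apply_ne_missingColor b o hb,
      by rintro rfl; exact apply_ne_missingColor b o (hb.trans hμ)⟩
  have hs : s.Nonempty := (hc.1 i).elim fun v hv => ⟨v.2, mem_s.2 ⟨v.1, hv⟩⟩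
  obtain ⟨b₁, hb₁⟩ := mem_s.1 (s.min'_mem hs)
  obtain ⟨b₂, hb₂⟩ := mem_s.1 (s.max'_mem hs)
  have hfirst := hc.lt_two_of_forall_le hb₁ fun b o h => s.min'_le o (mem_s.2 ⟨b, h⟩)
  have hlast := hc.lt_add_three_of_forall_ge hb₂ fun b o h => s.le_max' o (mem_s.2 ⟨b, h⟩)
  have := hne (s.min'_mem hs)
  have := hne (s.max'_mem hs)
  obtain ⟨p, hp, q, hq, hpj, hjq, hgap⟩ :=
    Finset.exists_le_le_forall_le_or_le (k := j) (s.min'_mem hs) (s.max'_mem hs) (by omega)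
      (by omega)
  obtain ⟨bp, hbp⟩ := mem_s.1 hp
  obtain ⟨bq, hbq⟩ := mem_s.1 hq
  have := hc.lt_add_three_of_forall_le_or_ge hm hbp hbq fun b o h => hgap o (mem_s.2 ⟨b, h⟩)
  have := hne hp
  have := hne hq
  omega

lemma IsLocatingColoring.exists_colorCode_missingColor_eq_one (hc : IsLocatingColoring 𝒢 c)
    (hm : 3 ≤ m) (hn : 2 ≤ n) (j : Fin n) :
    ∃ a, colorCode 𝒢 c (a, j) (missingColor c j) = 1 := by
  obtain ⟨j', hjj'⟩ : ∃ j', (pathGraph n).Adj j j' := by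
    by_cases h : (j : ℕ) + 1 < n
    · exact ⟨⟨j + 1, h⟩, pathGraph_adj.2 (Or.inl rfl)⟩
    · exact ⟨⟨j - 1, by omega⟩, pathGraph_adj.2 (Or.inr (Nat.sub_add_cancel (by omega)))⟩
  obtain ⟨a, ha⟩ := hc.exists_apply_eq (hc.missingColor_ne_of_adj hm hjj')
  exact ⟨a, colorCode_eq_one_of_adj (preconnected_top.boxProd (pathGraph_preconnected n))
    (apply_ne_missingColor a j) ha (boxProd_adj_right.2 hjj')⟩

end LocatingColoring

/-- For `m ≥ 3` and `n ≥ 2`, if `K_m □ P_n` admits a locating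
`(m+1)`-coloring, then `n ≤ m + 1`. -/
theorem stmt9 (m n : ℕ) (hm : 3 ≤ m) (hn : 2 ≤ n)
    (h : ∃ c : Fin m × Fin n → Fin (m + 1),
      IsLocatingColoring ((⊤ : SimpleGraph (Fin m)) □ pathGraph n) c) :
    n ≤ m + 1 := by
  obtain ⟨c, hc⟩ := h
  choose a ha using hc.exists_colorCode_missingColor_eq_one hm hn
  have hinj : Function.Injective fun j => c (a j, j) := fun j j' h =>
    congrArg Prod.snd (hc.eq_of_colorCode_missingColor_eq_one h (ha j) (ha j'))
  simpa using Fintype.card_le_of_injective _ hinj
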